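/- arXiv:2602.20864 — 2 statements merged into one kernel-verified Lean document; each statement's English description precedes it below -/
import Mathlib

section
/- Let c₁, d₁ be real numbers with (c₁ − d₁)² < 16. Then the integral over [0, 2π] of (c₁(cos θ)² + 3 sin θ cos θ + d₁(sin θ)²) / (4(cos θ)² + (d₁ − c₁) sin θ cos θ + (sin θ)²) dθ equals 2π(c₁ + d₁)/√(16 − (c₁ − d₁)²). -/
/-!
Write `Q(θ) = 4 cos² θ + (d₁ - c₁) sin θ cos θ + sin² θ`. Since `cos² + sin² = 1`, the numerator
is `(c₁ + d₁) / 2 - Q'(θ) / 2`, and `Q' / Q = (log Q)'` integrates to zero over a period. For the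
remaining `∫ 1 / Q`, the substitution `t = tan θ` turns a positive definite binary quadratic form
`A cos² + B sin cos + C sin²` into `cos² θ · (A + B t + C t²)`, giving the antiderivative
`2 / √Δ · arctan ((2 C tan θ + B) / √Δ)` with `Δ = 4 A C - B²` on `(-π/2, π/2)`; so `∫ 1 / Q` is
`2π / √Δ` over a half period and `4π / √Δ` over `[0, 2π]`.
-/

open Real Filter Set MeasureTheory intervalIntegral

noncomputable def trigQuad (A B C θ : ℝ) : ℝ := A * cos θ ^ 2 + B * sin θ * cos θ + C * sin θ ^ 2

lemma trigQuad_add_pi (A B C θ : ℝ) : trigQuad A B C (θ + π) = trigQuad A B C θ := by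
  simp only [trigQuad, sin_add_pi, cos_add_pi]
  ring

lemma continuous_trigQuad (A B C : ℝ) : Continuous (trigQuad A B C) := by
  unfold trigQuad
  fun_prop

lemma hasDerivAt_trigQuad (A B C θ : ℝ) :
    HasDerivAt (trigQuad A B C)
      (B * (cos θ ^ 2 - sin θ ^ 2) + 2 * (C - A) * sin θ * cos θ) θ := by
  have h := ((((hasDerivAt_cos θ).pow 2).const_mul A).add
    (((hasDerivAt_sin θ).const_mul B).mul (hasDerivAt_cos θ))).add
    (((hasDerivAt_sin θ).pow 2).const_mul C)
  exact h.congr_deriv (by push_cast; ring)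

section PositiveDefinite

variable {A B C : ℝ}

lemma trigQuad_pos (hC : 0 < C) (hdisc : B ^ 2 < 4 * A * C) (θ : ℝ) :
    0 < trigQuad A B C θ := by
  have hA : 0 < A := by nlinarith [sq_nonneg B]
  have hcs := sin_sq_add_cos_sq θ
  have hcos_sq : (4 * A * C - B ^ 2) * cos θ ^ 2 ≤ 4 * C * trigQuad A B C θ := by
    unfold trigQuad
    nlinarith [sq_nonneg (2 * C * sin θ + B * cos θ)]
  have hsin_sq : (4 * A * C - B ^ 2) * sin θ ^ 2 ≤ 4 * A * trigQuad A B C θ := by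
    unfold trigQuad
    nlinarith [sq_nonneg (2 * A * cos θ + B * sin θ)]
  nlinarith

lemma continuous_inv_trigQuad (hC : 0 < C) (hdisc : B ^ 2 < 4 * A * C) :
    Continuous fun θ => (trigQuad A B C θ)⁻¹ :=
  (continuous_trigQuad A B C).inv₀ fun θ => (trigQuad_pos hC hdisc θ).ne'

lemma hasDerivAt_arctan_tan_trigQuad (hC : 0 < C) (hdisc : B ^ 2 < 4 * A * C) {θ : ℝ}
    (hθ : cos θ ≠ 0) :
    HasDerivAt (fun θ => 2 / √(4 * A * C - B ^ 2) *
        arctan ((2 * C * tan θ + B) / √(4 * A * C - B ^ 2)))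
      (trigQuad A B C θ)⁻¹ θ := by
  set s := √(4 * A * C - B ^ 2)
  have hs : 0 < s := sqrt_pos.2 (by linarith)
  have hs2 : s ^ 2 = 4 * A * C - B ^ 2 := sq_sqrt (by linarith)
  have h := ((((hasDerivAt_tan hθ).const_mul (2 * C)).add_const B).div_const s).arctan.const_mul
    (2 / s)
  refine h.congr_deriv ?_
  have hQ := (trigQuad_pos hC hdisc θ).ne'
  rw [tan_eq_sin_div_cos]
  unfold trigQuad at hQ ⊢
  field_simp
  rw [hs2, eq_div_iff (by convert hQ using 1; ring)]
  ring

lemma integral_inv_trigQuad_neg_pi_div_two_pi_div_two (hC : 0 < C)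
    (hdisc : B ^ 2 < 4 * A * C) :
    ∫ θ in -(π / 2)..π / 2, (trigQuad A B C θ)⁻¹ = 2 * π / √(4 * A * C - B ^ 2) := by
  set s := √(4 * A * C - B ^ 2)
  have hs : 0 < s := sqrt_pos.2 (by linarith)
  have hlin_top : Tendsto (fun t => (2 * C * t + B) / s) atTop atTop :=
    (tendsto_atTop_add_const_right _ B
      (tendsto_id.const_mul_atTop (by positivity))).atTop_div_const hs
  have hlin_bot : Tendsto (fun t => (2 * C * t + B) / s) atBot atBot :=
    (tendsto_atBot_add_const_right _ B
      (tendsto_id.const_mul_atBot (by positivity))).atBot_div_const hs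
  rw [integral_eq_sub_of_hasDerivAt_of_tendsto (by linarith [pi_pos])
    (fun θ hθ => hasDerivAt_arctan_tan_trigQuad hC hdisc (cos_pos_of_mem_Ioo hθ).ne')
    ((continuous_inv_trigQuad hC hdisc).intervalIntegrable _ _)
    (((tendsto_arctan_atBot.mono_right nhdsWithin_le_nhds).comp
      (hlin_bot.comp tendsto_tan_neg_pi_div_two)).const_mul (2 / s))
    (((tendsto_arctan_atTop.mono_right nhdsWithin_le_nhds).comp
      (hlin_top.comp tendsto_tan_pi_div_two)).const_mul (2 / s))]
  ring

lemma integral_inv_trigQuad_zero_two_pi (hC : 0 < C) (hdisc : B ^ 2 < 4 * A * C) :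
    ∫ θ in 0..2 * π, (trigQuad A B C θ)⁻¹ = 4 * π / √(4 * A * C - B ^ 2) := by
  have hper : Function.Periodic (fun θ => (trigQuad A B C θ)⁻¹) π := fun θ => by
    simp only [trigQuad_add_pi]
  have h := hper.intervalIntegral_add_zsmul_eq 2 0
    fun a b => (continuous_inv_trigQuad hC hdisc).intervalIntegrable a b
  rw [hper.intervalIntegral_add_eq 0 (-(π / 2)), neg_add_eq_sub, sub_half,
    integral_inv_trigQuad_neg_pi_div_two_pi_div_two hC hdisc] at h
  simp only [zero_add, zsmul_eq_mul, Int.cast_ofNat] at h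
  rw [h]
  ring

end PositiveDefinite

lemma integral_div_self_eq_zero_of_hasDerivAt {f f' : ℝ → ℝ} {a b : ℝ}
    (hf : ∀ x ∈ uIcc a b, HasDerivAt f (f' x) x) (hne : ∀ x ∈ uIcc a b, f x ≠ 0)
    (hint : IntervalIntegrable (fun x => f' x / f x) volume a b) (hab : f a = f b) :
    ∫ x in a..b, f' x / f x = 0 := by
  rw [integral_eq_sub_of_hasDerivAt (fun x hx => (hf x hx).log (hne x hx)) hint, hab, sub_self]

theorem stmt3 (c₁ d₁ : ℝ) (h : (c₁ - d₁) ^ 2 < 16) :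
    ∫ θ in (0 : ℝ)..(2 * Real.pi),
        (c₁ * (Real.cos θ) ^ 2 + 3 * Real.sin θ * Real.cos θ + d₁ * (Real.sin θ) ^ 2) /
          (4 * (Real.cos θ) ^ 2 + (d₁ - c₁) * Real.sin θ * Real.cos θ + (Real.sin θ) ^ 2)
      = 2 * Real.pi * (c₁ + d₁) / Real.sqrt (16 - (c₁ - d₁) ^ 2) := by
  set Q := trigQuad 4 (d₁ - c₁) 1
  set Q' := fun θ => (d₁ - c₁) * (cos θ ^ 2 - sin θ ^ 2) + 2 * (1 - 4) * sin θ * cos θ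
  have hdisc : (d₁ - c₁) ^ 2 < 4 * 4 * 1 := by linarith [sub_sq_comm c₁ d₁]
  have hQ : ∀ θ, Q θ ≠ 0 := fun θ => (trigQuad_pos one_pos hdisc θ).ne'
  have hsplit : ∀ θ,
      (c₁ * cos θ ^ 2 + 3 * sin θ * cos θ + d₁ * sin θ ^ 2) /
          (4 * cos θ ^ 2 + (d₁ - c₁) * sin θ * cos θ + sin θ ^ 2)
        = (c₁ + d₁) / 2 * (Q θ)⁻¹ - 1 / 2 * (Q' θ / Q θ) := fun θ => by
    have hQθ := hQ θ
    simp only [Q, Q', trigQuad, one_mul] at hQθ ⊢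
    field_simp
    congr 1
    linear_combination (c₁ + d₁) * sin_sq_add_cos_sq θ
  have hlogDeriv : Continuous fun θ => Q' θ / Q θ :=
    (show Continuous Q' by fun_prop).div (continuous_trigQuad _ _ _) hQ
  simp_rw [hsplit]
  rw [integral_sub (((continuous_inv_trigQuad one_pos hdisc).intervalIntegrable _ _).const_mul _)
      ((hlogDeriv.intervalIntegrable _ _).const_mul _),
    intervalIntegral.integral_const_mul, intervalIntegral.integral_const_mul,
    integral_inv_trigQuad_zero_two_pi one_pos hdisc,
    integral_div_self_eq_zero_of_hasDerivAt (fun θ _ => hasDerivAt_trigQuad 4 (d₁ - c₁) 1 θ)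
      (fun θ _ => hQ θ) (hlogDeriv.intervalIntegrable _ _) (by simp [trigQuad]),
    show 4 * 4 * 1 - (d₁ - c₁) ^ 2 = 16 - (c₁ - d₁) ^ 2 by ring]
  ring
end

section
/- Let α, β, s be positive natural numbers with s > β, and let A, B, D be real numbers. Define H₁(x, y) = (1/(2sα))·((Ds − Bα − Dβ)·x^(2α)·y^(2β) − Aα·y^(2s)) and μ(x, y) = ((Bα + Dβ)/(sα))·x^(2α−1)·y^(2β−1). Then for all real x, y: −∂H₁/∂y(x, y) + μ(x, y)·(s − β)·x = A·y^(2s−1) + B·x^(2α)·y^(2β−1), and ∂H₁/∂x(x, y) + μ(x, y)·α·y = D·x^(2α−1)·y^(2β). -/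
noncomputable def H₁ (α β s : ℕ) (A B D : ℝ) (x y : ℝ) : ℝ :=
  (1 / (2 * (s : ℝ) * (α : ℝ))) *
    ((D * s - B * α - D * β) * x ^ (2 * α) * y ^ (2 * β) - A * α * y ^ (2 * s))

noncomputable def μdiss (α β s : ℕ) (B D : ℝ) (x y : ℝ) : ℝ :=
  ((B * α + D * β) / ((s : ℝ) * (α : ℝ))) * x ^ (2 * α - 1) * y ^ (2 * β - 1)

section

variable {α β s : ℕ} (A B D x y : ℝ)

lemma hasDerivAt_H₁_x (hα : α ≠ 0) :
    HasDerivAt (fun x' => H₁ α β s A B D x' y)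
      ((D * s - B * α - D * β) / s * x ^ (2 * α - 1) * y ^ (2 * β)) x := by
  have h := ((((hasDerivAt_pow (2 * α) x).const_mul (D * s - B * α - D * β)).mul_const
    (y ^ (2 * β))).sub_const (A * α * y ^ (2 * s))).const_mul (1 / (2 * (s : ℝ) * α))
  refine h.congr_deriv ?_
  have hα₀ : (α : ℝ) ≠ 0 := by exact_mod_cast hα
  push_cast
  field_simp

lemma hasDerivAt_H₁_y (hα : α ≠ 0) (hs : s ≠ 0) :
    HasDerivAt (fun y' => H₁ α β s A B D x y')
      (β / (s * α) * (D * s - B * α - D * β) * x ^ (2 * α) * y ^ (2 * β - 1)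
        - A * y ^ (2 * s - 1)) y := by
  have h := (((hasDerivAt_pow (2 * β) y).const_mul ((D * s - B * α - D * β) * x ^ (2 * α))).sub
    ((hasDerivAt_pow (2 * s) y).const_mul (A * α))).const_mul (1 / (2 * (s : ℝ) * α))
  refine h.congr_deriv ?_
  have hα₀ : (α : ℝ) ≠ 0 := by exact_mod_cast hα
  have hs₀ : (s : ℝ) ≠ 0 := by exact_mod_cast hs
  push_cast
  field_simp

lemma μdiss_mul_x (hα : α ≠ 0) :
    μdiss α β s B D x y * x
      = (B * α + D * β) / (s * α) * x ^ (2 * α) * y ^ (2 * β - 1) := by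
  rw [μdiss, ← pow_sub_one_mul (show 2 * α ≠ 0 by omega)]
  ring

lemma μdiss_mul_y (hβ : β ≠ 0) :
    μdiss α β s B D x y * y
      = (B * α + D * β) / (s * α) * x ^ (2 * α - 1) * y ^ (2 * β) := by
  rw [μdiss, ← pow_sub_one_mul (show 2 * β ≠ 0 by omega)]
  ring

end

theorem stmt15_general (α β s : ℕ) (hα : 0 < α) (hβ : 0 < β) (hs : 0 < s)
    (A B D : ℝ) :
    ∀ x y : ℝ,
      (-(deriv (fun y' => H₁ α β s A B D x y') y)
          + μdiss α β s B D x y * ((s : ℝ) - (β : ℝ)) * x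
        = A * y ^ (2 * s - 1) + B * x ^ (2 * α) * y ^ (2 * β - 1)) ∧
      (deriv (fun x' => H₁ α β s A B D x' y) x + μdiss α β s B D x y * (α : ℝ) * y
        = D * x ^ (2 * α - 1) * y ^ (2 * β)) := by
  intro x y
  have hα₀ : (α : ℝ) ≠ 0 := by positivity
  have hs₀ : (s : ℝ) ≠ 0 := by positivity
  rw [(hasDerivAt_H₁_y A B D x y hα.ne' hs.ne').deriv, (hasDerivAt_H₁_x A B D x y hα.ne').deriv,
    mul_right_comm _ _ x, μdiss_mul_x B D x y hα.ne', mul_right_comm _ _ y,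
    μdiss_mul_y B D x y hβ.ne']
  -- The `x ^ (2α) * y ^ (2β - 1)` terms combine since `(s - β)(Bα + Dβ) - β(Ds - Bα - Dβ) = sαB`.
  constructor <;> (field_simp; ring)

theorem stmt15 (α β s : ℕ) (hα : 0 < α) (hβ : 0 < β) (hs : 0 < s) (hβs : β < s)
    (A B D : ℝ) :
    ∀ x y : ℝ,
      (-(deriv (fun y' => H₁ α β s A B D x y') y)
          + μdiss α β s B D x y * ((s : ℝ) - (β : ℝ)) * x
        = A * y ^ (2 * s - 1) + B * x ^ (2 * α) * y ^ (2 * β - 1)) ∧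
      (deriv (fun x' => H₁ α β s A B D x' y) x + μdiss α β s B D x y * (α : ℝ) * y
        = D * x ^ (2 * α - 1) * y ^ (2 * β)) :=
  stmt15_general α β s hα hβ hs A B D
end
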